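/- Let f : ℝ^d → ℝ^d be differentiable with Jacobian Df, let N ≥ 1 and step sizes h₀,…,h_{N−1} > 0. For (q₀, p₀) ∈ ℝ^d × ℝ^d define the Störmer–Verlet iterates: q_{n+1/2} = q_n + (h_n/2) p_n, p_{n+1} = p_n − h_n f(q_{n+1/2}), q_{n+1} = q_{n+1/2} + (h_n/2) p_{n+1}, for n = 0,…,N−1. Let J : ℝ^d × ℝ^d → ℝ be differentiable and set R(q₀, p₀) = J(q_N, p_N). Fix (q₀, p₀), and suppose sequences (λ_n)_{n=0}^N, (ν_n)_{n=0}^N, (ν_{n+1/2})_{n=0}^{N−1} satisfy ν_{n+1/2} = ν_n − (h_n/2) λ_n, λ_{n+1} = λ_n + h_n (Df(q_{n+1/2}))^⊤ ν_{n+1/2}, ν_{n+1} = ν_{n+1/2} − (h_n/2) λ_{n+1} for n = 0,…,N−1, together with the final condition (λ_N, ν_N) = (∇_q J(q_N, p_N), ∇_p J(q_N, p_N)). Then (λ₀, ν₀) = (∇_{q₀} R(q₀, p₀), ∇_{p₀} R(q₀, p₀)). -/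

import Mathlib

/-- Störmer–Verlet iterates: `q_{n+1/2} = q_n + (h_n/2) p_n`, `p_{n+1} = p_n - h_n f(q_{n+1/2})`,
`q_{n+1} = q_{n+1/2} + (h_n/2) p_{n+1}`. -/
noncomputable def svIter {E : Type*} [NormedAddCommGroup E] [NormedSpace ℝ E]
    (f : E → E) (h : ℕ → ℝ) (q0 p0 : E) : ℕ → E × E
  | 0 => (q0, p0)
  | n + 1 =>
    let qp := svIter f h q0 p0 n
    let qh := qp.1 + (h n / 2) • qp.2
    let p' := qp.2 - h n • f qh
    (qh + (h n / 2) • p', p')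

/-!
Each Störmer–Verlet step is differentiable, and its derivative is the Störmer–Verlet step of the
variational equation. The adjoint step is exactly the transpose of that linear map: it preserves
the pairing `⟪λ, δq⟫ + ⟪ν, δp⟫`. Hence, by backward induction from the final condition, `(λₙ, νₙ)`
represents the derivative of `J` composed with the steps `n, …, N-1` at the `n`-th iterate, and at
`n = 0` this is the gradient of `R`.
-/

open ContinuousLinearMap InnerProductSpace

section PartialGradient

variable {E F : Type*} [NormedAddCommGroup E] [InnerProductSpace ℝ E] [CompleteSpace E]
  [NormedAddCommGroup F] [InnerProductSpace ℝ F] [CompleteSpace F]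
  {Φ : E × F → ℝ} {q : E} {p : F}

theorem HasFDerivAt.hasGradientAt_left {u : E} {v : F}
    (hΦ : HasFDerivAt Φ ((toDual ℝ E u).coprod (toDual ℝ F v)) (q, p)) :
    HasGradientAt (fun q' => Φ (q', p)) u q := by
  rw [hasGradientAt_iff_hasFDerivAt]
  refine (hΦ.comp q (hasFDerivAt_prodMk_left (𝕜 := ℝ) q p)).congr_fderiv ?_
  ext; simp

theorem HasFDerivAt.hasGradientAt_right {u : E} {v : F}
    (hΦ : HasFDerivAt Φ ((toDual ℝ E u).coprod (toDual ℝ F v)) (q, p)) :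
    HasGradientAt (fun p' => Φ (q, p')) v p := by
  rw [hasGradientAt_iff_hasFDerivAt]
  refine (hΦ.comp p (hasFDerivAt_prodMk_right (𝕜 := ℝ) q p)).congr_fderiv ?_
  ext; simp

theorem DifferentiableAt.hasFDerivAt_coprod_gradient (hΦ : DifferentiableAt ℝ Φ (q, p)) :
    HasFDerivAt Φ ((toDual ℝ E (gradient (fun q' => Φ (q', p)) q)).coprod
      (toDual ℝ F (gradient (fun p' => Φ (q, p')) p))) (q, p) := by
  have hq := (hΦ.hasFDerivAt.comp q (hasFDerivAt_prodMk_left (𝕜 := ℝ) q p)).fderiv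
  have hp := (hΦ.hasFDerivAt.comp p (hasFDerivAt_prodMk_right (𝕜 := ℝ) q p)).fderiv
  rw [toDual_gradient, toDual_gradient]
  convert hΦ.hasFDerivAt using 1
  rw [← coprod_comp_inl_inr (fderiv ℝ Φ (q, p))]
  exact congr_arg₂ _ hq hp

end PartialGradient

section Step

variable {E : Type*} [NormedAddCommGroup E] [NormedSpace ℝ E]

noncomputable def svStep (f : E → E) (τ : ℝ) (x : E × E) : E × E :=
  let qh := x.1 + (τ / 2) • x.2
  let p' := x.2 - τ • f qh
  (qh + (τ / 2) • p', p')

theorem svIter_succ (f : E → E) (h : ℕ → ℝ) (q0 p0 : E) (n : ℕ) :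
    svIter f h q0 p0 (n + 1) = svStep f (h n) (svIter f h q0 p0 n) := rfl

/-- `svFlow f h n m x` performs the `m` Störmer–Verlet steps with step sizes `h n, …, h (n+m-1)`
starting from `x`. -/
noncomputable def svFlow (f : E → E) (h : ℕ → ℝ) : ℕ → ℕ → E × E → E × E
  | _, 0, x => x
  | n, m + 1, x => svFlow f h (n + 1) m (svStep f (h n) x)

theorem svFlow_svIter (f : E → E) (h : ℕ → ℝ) (q0 p0 : E) (n m : ℕ) :
    svFlow f h n m (svIter f h q0 p0 n) = svIter f h q0 p0 (n + m) := by
  induction m generalizing n with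
  | zero => rfl
  | succ m ih => rw [svFlow, ← svIter_succ, ih, Nat.add_right_comm, Nat.add_assoc]

theorem svIter_eq_svFlow (f : E → E) (h : ℕ → ℝ) (q0 p0 : E) (m : ℕ) :
    svIter f h q0 p0 m = svFlow f h 0 m (q0, p0) := by
  have h0 := svFlow_svIter f h q0 p0 0 m
  rw [Nat.zero_add] at h0
  exact h0.symm

noncomputable def svStepLin (A : E →L[ℝ] E) (τ : ℝ) : E × E →L[ℝ] E × E :=
  let Qh := fst ℝ E E + (τ / 2) • snd ℝ E E
  let P' := snd ℝ E E - τ • A ∘L Qh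
  (Qh + (τ / 2) • P').prod P'

theorem hasFDerivAt_svStep {f : E → E} (τ : ℝ) {x : E × E}
    (hf : DifferentiableAt ℝ f (x.1 + (τ / 2) • x.2)) :
    HasFDerivAt (svStep f τ) (svStepLin (fderiv ℝ f (x.1 + (τ / 2) • x.2)) τ) x := by
  have hqh : HasFDerivAt (fun x : E × E => x.1 + (τ / 2) • x.2)
      (fst ℝ E E + (τ / 2) • snd ℝ E E) x :=
    hasFDerivAt_fst.add (hasFDerivAt_snd.const_smul _)
  have hp' := hasFDerivAt_snd.sub ((hf.hasFDerivAt.comp x hqh).const_smul τ)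
  exact (hqh.add (hp'.const_smul (τ / 2))).prodMk hp'

end Step

section Adjoint

variable {E : Type*} [NormedAddCommGroup E] [InnerProductSpace ℝ E] [CompleteSpace E]

theorem coprod_toDual_comp_svStepLin (A : E →L[ℝ] E) (τ : ℝ) {lam nu nuh lam' nu' : E}
    (hnuh : nuh = nu - (τ / 2) • lam) (hlam : lam' = lam + τ • adjoint A nuh)
    (hnu : nu' = nuh - (τ / 2) • lam') :
    ((toDual ℝ E lam').coprod (toDual ℝ E nu')).comp (svStepLin A τ) =
      (toDual ℝ E lam).coprod (toDual ℝ E nu) := by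
  subst hnu hlam hnuh
  refine ContinuousLinearMap.ext fun ⟨dq, dp⟩ => ?_
  simp only [svStepLin, comp_apply, coprod_apply, prod_apply, add_apply, sub_apply, smul_apply,
    coe_fst', coe_snd', toDual_apply_apply, inner_add_left, inner_add_right, inner_sub_left,
    inner_sub_right, real_inner_smul_left, real_inner_smul_right, adjoint_inner_left, map_add,
    map_smul, smul_eq_mul]
  ring

theorem hasFDerivAt_comp_svFlow {f : E → E} (hf : Differentiable ℝ f) {h : ℕ → ℝ}
    {Φ : E × E → ℝ} {N : ℕ} {q0 p0 : E} {lam nu nuh : ℕ → E}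
    (hnuh : ∀ n, n < N → nuh n = nu n - (h n / 2) • lam n)
    (hlam : ∀ n, n < N → lam (n + 1) = lam n + h n •
      adjoint (fderiv ℝ f ((svIter f h q0 p0 n).1 + (h n / 2) • (svIter f h q0 p0 n).2)) (nuh n))
    (hnu : ∀ n, n < N → nu (n + 1) = nuh n - (h n / 2) • lam (n + 1))
    (hΦ : HasFDerivAt Φ ((toDual ℝ E (lam N)).coprod (toDual ℝ E (nu N))) (svIter f h q0 p0 N))
    (n m : ℕ) (hnm : n + m = N) :
    HasFDerivAt (fun x => Φ (svFlow f h n m x)) ((toDual ℝ E (lam n)).coprod (toDual ℝ E (nu n)))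
      (svIter f h q0 p0 n) := by
  induction m generalizing n with
  | zero => subst hnm; exact hΦ
  | succ m ih =>
    have hn : n < N := by omega
    have hstep :=
      (ih (n + 1) (by omega)).comp (svIter f h q0 p0 n) (hasFDerivAt_svStep (h n) (hf _))
    rwa [coprod_toDual_comp_svStepLin _ _ (hnuh n hn) (hlam n hn) (hnu n hn)] at hstep

end Adjoint

theorem stmt_14_general (d N : ℕ)
    (f : EuclideanSpace ℝ (Fin d) → EuclideanSpace ℝ (Fin d))
    (hf : Differentiable ℝ f)
    (h : ℕ → ℝ)
    (J : EuclideanSpace ℝ (Fin d) → EuclideanSpace ℝ (Fin d) → ℝ)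
    (hJ : Differentiable ℝ (fun qp : EuclideanSpace ℝ (Fin d) × EuclideanSpace ℝ (Fin d) =>
      J qp.1 qp.2))
    (q0 p0 : EuclideanSpace ℝ (Fin d))
    (lam nu nuh : ℕ → EuclideanSpace ℝ (Fin d))
    (hnuh : ∀ n, n < N → nuh n = nu n - (h n / 2) • lam n)
    (hlam : ∀ n, n < N → lam (n + 1) = lam n + h n •
      (ContinuousLinearMap.adjoint
        (fderiv ℝ f ((svIter f h q0 p0 n).1 + (h n / 2) • (svIter f h q0 p0 n).2))) (nuh n))
    (hnu : ∀ n, n < N → nu (n + 1) = nuh n - (h n / 2) • lam (n + 1))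
    (hlamN : lam N = gradient (fun q => J q (svIter f h q0 p0 N).2) (svIter f h q0 p0 N).1)
    (hnuN : nu N = gradient (fun p => J (svIter f h q0 p0 N).1 p) (svIter f h q0 p0 N).2) :
    lam 0 = gradient (fun q0' => J (svIter f h q0' p0 N).1 (svIter f h q0' p0 N).2) q0 ∧
    nu 0 = gradient (fun p0' => J (svIter f h q0 p0' N).1 (svIter f h q0 p0' N).2) p0 := by
  have hJN := (hJ (svIter f h q0 p0 N)).hasFDerivAt_coprod_gradient
  rw [← hlamN, ← hnuN] at hJN
  have hR := hasFDerivAt_comp_svFlow hf hnuh hlam hnu hJN 0 N (Nat.zero_add N)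
  simp only [svIter_eq_svFlow]
  exact ⟨hR.hasGradientAt_left.gradient.symm, hR.hasGradientAt_right.gradient.symm⟩

/-- Discrete adjoint of the Störmer–Verlet method: with
`R(q₀,p₀) = J(q_N, p_N)` and the backward adjoint scheme
`ν_{n+1/2} = ν_n - (h_n/2) λ_n`, `λ_{n+1} = λ_n + h_n (Df(q_{n+1/2}))ᵀ ν_{n+1/2}`,
`ν_{n+1} = ν_{n+1/2} - (h_n/2) λ_{n+1}` with final condition
`(λ_N, ν_N) = (∇_q J(q_N,p_N), ∇_p J(q_N,p_N))`, one has
`(λ₀, ν₀) = (∇_{q₀} R(q₀,p₀), ∇_{p₀} R(q₀,p₀))`. -/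
theorem stmt_14 (d N : ℕ) (hN : 1 ≤ N)
    (f : EuclideanSpace ℝ (Fin d) → EuclideanSpace ℝ (Fin d))
    (hf : Differentiable ℝ f)
    (h : ℕ → ℝ) (hh : ∀ n, n < N → 0 < h n)
    (J : EuclideanSpace ℝ (Fin d) → EuclideanSpace ℝ (Fin d) → ℝ)
    (hJ : Differentiable ℝ (fun qp : EuclideanSpace ℝ (Fin d) × EuclideanSpace ℝ (Fin d) =>
      J qp.1 qp.2))
    (q0 p0 : EuclideanSpace ℝ (Fin d))
    (lam nu nuh : ℕ → EuclideanSpace ℝ (Fin d))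
    (hnuh : ∀ n, n < N → nuh n = nu n - (h n / 2) • lam n)
    (hlam : ∀ n, n < N → lam (n + 1) = lam n + h n •
      (ContinuousLinearMap.adjoint
        (fderiv ℝ f ((svIter f h q0 p0 n).1 + (h n / 2) • (svIter f h q0 p0 n).2))) (nuh n))
    (hnu : ∀ n, n < N → nu (n + 1) = nuh n - (h n / 2) • lam (n + 1))
    (hlamN : lam N = gradient (fun q => J q (svIter f h q0 p0 N).2) (svIter f h q0 p0 N).1)
    (hnuN : nu N = gradient (fun p => J (svIter f h q0 p0 N).1 p) (svIter f h q0 p0 N).2) :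
    lam 0 = gradient (fun q0' => J (svIter f h q0' p0 N).1 (svIter f h q0' p0 N).2) q0 ∧
    nu 0 = gradient (fun p0' => J (svIter f h q0 p0' N).1 (svIter f h q0 p0' N).2) p0 :=
  stmt_14_general d N f hf h J hJ q0 p0 lam nu nuh hnuh hlam hnu hlamN hnuN
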